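/- Let $A$ be a unital associative ring, let $k > 1$ be an integer, and let $\sigma$ be a permutation of the set $\{1, 2, 3, 4\}$. Then for all $g_1, \dots, g_{k-1}, f_1, f_2, f_3, f_4 \in A$, the element $[g_1, \dots, g_{k-1}, f_{\sigma(1)}][f_{\sigma(2)}, f_{\sigma(3)}, f_{\sigma(4)}] - (-1)^{\sigma}\,[g_1, \dots, g_{k-1}, f_1][f_2, f_3, f_4]$ belongs to $T^{(k+2)}(A)$, where $(-1)^{\sigma}$ denotes the sign of $\sigma$. -/

import Mathlib

/-- The ring commutator `[a, b] = a * b - b * a`. -/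
def brk {A : Type*} [NonUnitalNonAssocRing A] (a b : A) : A := a * b - b * a

/-- The left-normed commutator `[a 0, a 1, ..., a (k-1)]`. -/
def lnc {A : Type*} [NonUnitalNonAssocRing A] : ∀ {k : ℕ}, (Fin k → A) → A
  | 0, _ => 0
  | 1, a => a 0
  | k + 2, a => brk (lnc (Fin.init a)) (a (Fin.last (k + 1)))

/-- `T A m` is the two-sided ideal of `A` generated by all left-normed commutators
of length `m` (for `m = 1` this is all of `A`). -/
def T (A : Type*) [NonUnitalNonAssocRing A] (m : ℕ) : TwoSidedIdeal A :=
  TwoSidedIdeal.span {x | ∃ a : Fin m → A, x = lnc a}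

/-!
Put `u = [g₁, …, g_{k-1}]`. Modulo `I = T^{(k+2)}` every commutator `[u, x, y, z]` vanishes, so
in the ring `A ⧸ I` the element `[u, a]` commutes with all commutators and every `[u, x, y]` is
central. There the product `P(a, b, c, d) = [u, a][b, c, d]` changes sign when `b` and `c` are
swapped (trivially), when `a` and `d` are swapped (expand `[[u, ad], [b, c]] = 0` by the Leibniz
rule) and when `a` and `b` are swapped (expand `[u, ab, c, d] = 0`). These transpositions
generate `S₄`, so `P` is alternating.
-/

open Equiv Equiv.Perm

theorem brk_eq_lie {A : Type*} [Ring A] (a b : A) : brk a b = ⁅a, b⁆ := (Ring.lie_def a b).symm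

theorem lnc_snoc {A : Type*} [NonUnitalNonAssocRing A] {n : ℕ} (v : Fin (n + 1) → A) (x : A) :
    lnc (Fin.snoc v x) = brk (lnc v) x := by
  rw [lnc, Fin.init_snoc, Fin.snoc_last]

theorem lnc_three {A : Type*} [NonUnitalNonAssocRing A] (x y z : A) :
    lnc ![x, y, z] = brk (brk x y) z := rfl

theorem lnc_mem_T {A : Type*} [NonUnitalNonAssocRing A] {m : ℕ} (a : Fin m → A) :
    lnc a ∈ T A m :=
  TwoSidedIdeal.subset_span ⟨a, rfl⟩

section SignEquivariance

variable {ι M N : Type*} [DecidableEq ι] [Fintype ι] [AddCommGroup N]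

def signEquivariantPerms (P : (ι → M) → N) : Submonoid (Perm ι) where
  carrier := {σ | ∀ f, P (f ∘ σ) = (sign σ : ℤ) • P f}
  one_mem' f := by simp
  mul_mem' {σ τ} hσ hτ f := by
    rw [coe_mul, ← Function.comp_assoc, hτ, hσ, smul_smul, Perm.sign_mul, Units.val_mul, mul_comm]

theorem comp_perm_eq_sign_smul_of_swap_castSucc_succ {n : ℕ} {P : (Fin (n + 1) → M) → N}
    (hP : ∀ (i : Fin n) f, P (f ∘ swap i.castSucc i.succ) = -P f) (σ : Perm (Fin (n + 1)))
    (f : Fin (n + 1) → M) : P (f ∘ σ) = (sign σ : ℤ) • P f := by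
  have hle : Submonoid.closure (Set.range fun i : Fin n ↦ swap i.castSucc i.succ) ≤
      signEquivariantPerms P := by
    rw [Submonoid.closure_le]
    rintro _ ⟨i, rfl⟩ f
    rw [hP, sign_swap Fin.castSucc_lt_succ.ne, Units.val_neg, Units.val_one, neg_one_smul]
  rw [mclosure_swap_castSucc_succ] at hle
  exact hle (Submonoid.mem_top σ) f

end SignEquivariance

section

variable {B : Type*} [Ring B] {u : B}

theorem lie_lie_lie_eq_zero (hu : ∀ x y z : B, ⁅⁅⁅u, x⁆, y⁆, z⁆ = 0) (a b c : B) :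
    ⁅⁅u, a⁆, ⁅b, c⁆⁆ = 0 := by
  have jacobi : ⁅⁅u, a⁆, ⁅b, c⁆⁆ = ⁅⁅⁅u, a⁆, b⁆, c⁆ - ⁅⁅⁅u, a⁆, c⁆, b⁆ := by
    simp only [Ring.lie_def]; noncomm_ring
  rw [jacobi, hu, hu, sub_zero]

theorem lie_lie_mul_lie_add_lie_lie_mul_lie_eq_zero (hu : ∀ x y z : B, ⁅⁅⁅u, x⁆, y⁆, z⁆ = 0)
    (a b c d : B) : ⁅⁅u, a⁆, b⁆ * ⁅c, d⁆ + ⁅⁅u, a⁆, c⁆ * ⁅b, d⁆ = 0 := by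
  have key : ⁅⁅u, a⁆, b⁆ * ⁅c, d⁆ + ⁅⁅u, a⁆, c⁆ * ⁅b, d⁆ =
      ⁅⁅⁅u, a⁆, b * c⁆, d⁆ - ⁅⁅⁅u, a⁆, b⁆, d⁆ * c - b * ⁅⁅⁅u, a⁆, c⁆, d⁆
        + ⁅⁅⁅u, a⁆, c⁆, ⁅b, d⁆⁆ := by
    simp only [Ring.lie_def]; noncomm_ring
  rw [key, hu, hu, hu, hu]; simp

def commProd (u a b c d : B) : B := ⁅u, a⁆ * ⁅⁅b, c⁆, d⁆

theorem commProd_swap_one_two (u a b c d : B) : commProd u a c b d = -commProd u a b c d := by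
  simp only [commProd, Ring.lie_def]; noncomm_ring

theorem commProd_swap_zero_three (hu : ∀ x y z : B, ⁅⁅⁅u, x⁆, y⁆, z⁆ = 0) (a b c d : B) :
    commProd u d b c a = -commProd u a b c d := by
  rw [eq_neg_iff_add_eq_zero]
  have key : commProd u d b c a + commProd u a b c d =
      -⁅⁅u, a * d⁆, ⁅b, c⁆⁆ + ⁅⁅u, a⁆, ⁅b, c⁆⁆ * d + a * ⁅⁅u, d⁆, ⁅b, c⁆⁆
        - ⁅⁅u, d⁆, ⁅a, ⁅b, c⁆⁆⁆ := by
    simp only [commProd, Ring.lie_def]; noncomm_ring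
  simp only [key, lie_lie_lie_eq_zero hu]; simp

theorem commProd_swap_zero_one (hu : ∀ x y z : B, ⁅⁅⁅u, x⁆, y⁆, z⁆ = 0) (a b c d : B) :
    commProd u b a c d = -commProd u a b c d := by
  rw [eq_neg_iff_add_eq_zero]
  have key : commProd u b a c d + commProd u a b c d =
      ⁅⁅⁅u, a * b⁆, c⁆, d⁆ - ⁅⁅⁅u, a⁆, c⁆, d⁆ * b - a * ⁅⁅⁅u, b⁆, c⁆, d⁆
        + ⁅⁅⁅u, b⁆, c⁆, ⁅a, d⁆⁆ + ⁅⁅⁅u, b⁆, d⁆, ⁅a, c⁆⁆ + ⁅⁅u, b⁆, ⁅⁅a, c⁆, d⁆⁆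
        - (⁅⁅u, a⁆, c⁆ * ⁅b, d⁆ + ⁅⁅u, a⁆, b⁆ * ⁅c, d⁆)
        - (⁅⁅u, a⁆, d⁆ * ⁅b, c⁆ + ⁅⁅u, a⁆, b⁆ * ⁅d, c⁆)
        - (⁅⁅u, b⁆, c⁆ * ⁅a, d⁆ + ⁅⁅u, b⁆, a⁆ * ⁅c, d⁆)
        - (⁅⁅u, b⁆, d⁆ * ⁅a, c⁆ + ⁅⁅u, b⁆, a⁆ * ⁅d, c⁆) := by
    simp only [commProd, Ring.lie_def]; noncomm_ring
  simp only [key, hu, lie_lie_lie_eq_zero hu, lie_lie_mul_lie_add_lie_lie_mul_lie_eq_zero hu]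
  simp

theorem commProd_swap_two_three (hu : ∀ x y z : B, ⁅⁅⁅u, x⁆, y⁆, z⁆ = 0) (a b c d : B) :
    commProd u a b d c = -commProd u a b c d := by
  calc commProd u a b d c
      = -commProd u c b d a := commProd_swap_zero_three hu c b d a
    _ = commProd u b c d a := by rw [commProd_swap_zero_one hu, neg_neg]
    _ = -commProd u b d c a := commProd_swap_one_two u b d c a
    _ = commProd u d b c a := by rw [commProd_swap_zero_one hu, neg_neg]
    _ = -commProd u a b c d := commProd_swap_zero_three hu a b c d

theorem commProd_comp_perm (hu : ∀ x y z : B, ⁅⁅⁅u, x⁆, y⁆, z⁆ = 0) (σ : Perm (Fin 4))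
    (f : Fin 4 → B) :
    commProd u (f (σ 0)) (f (σ 1)) (f (σ 2)) (f (σ 3))
      = (sign σ : ℤ) • commProd u (f 0) (f 1) (f 2) (f 3) := by
  refine comp_perm_eq_sign_smul_of_swap_castSucc_succ
    (P := fun f ↦ commProd u (f 0) (f 1) (f 2) (f 3)) (fun i f ↦ ?_) σ f
  fin_cases i
  exacts [commProd_swap_zero_one hu (f 0) (f 1) (f 2) (f 3),
    commProd_swap_one_two u (f 0) (f 1) (f 2) (f 3),
    commProd_swap_two_three hu (f 0) (f 1) (f 2) (f 3)]

theorem map_commProd {C : Type*} [Ring C] (φ : B →+* C) (u a b c d : B) :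
    φ (commProd u a b c d) = commProd (φ u) (φ a) (φ b) (φ c) (φ d) := by
  simp only [commProd, Ring.lie_def, map_sub, map_mul]

end

theorem commProd_comp_perm_sub_mem {A : Type*} [Ring A] (I : TwoSidedIdeal A) {u : A}
    (hu : ∀ x y z : A, ⁅⁅⁅u, x⁆, y⁆, z⁆ ∈ I) (σ : Perm (Fin 4)) (f : Fin 4 → A) :
    commProd u (f (σ 0)) (f (σ 1)) (f (σ 2)) (f (σ 3))
      - (sign σ : ℤ) • commProd u (f 0) (f 1) (f 2) (f 3) ∈ I := by
  set π := I.ringCon.mk'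
  have mem_iff (x : A) : x ∈ I ↔ π x = 0 := by
    rw [← TwoSidedIdeal.mem_ker, TwoSidedIdeal.ker_ringCon_mk']
  have hπu (x y z : I.ringCon.Quotient) : ⁅⁅⁅π u, x⁆, y⁆, z⁆ = 0 := by
    obtain ⟨x, rfl⟩ := I.ringCon.mk'_surjective x
    obtain ⟨y, rfl⟩ := I.ringCon.mk'_surjective y
    obtain ⟨z, rfl⟩ := I.ringCon.mk'_surjective z
    simpa only [Ring.lie_def, map_sub, map_mul] using (mem_iff _).mp (hu x y z)
  rw [mem_iff, map_sub, map_zsmul, map_commProd, map_commProd, sub_eq_zero]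
  exact commProd_comp_perm hπu σ (π ∘ f)

theorem comm_mul_comm3_perm_sign_mem {A : Type*} [Ring A] (k : ℕ) (hk : 1 < k)
    (σ : Equiv.Perm (Fin 4)) (g : Fin (k - 1) → A) (f : Fin 4 → A) :
    lnc (Fin.snoc g (f (σ 0))) * lnc ![f (σ 1), f (σ 2), f (σ 3)]
      - (Equiv.Perm.sign σ : ℤ) • (lnc (Fin.snoc g (f 0)) * lnc ![f 1, f 2, f 3])
      ∈ T A (k + 2) := by
  obtain ⟨m, rfl⟩ : ∃ m, k = m + 2 := ⟨k - 2, by omega⟩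
  have hu (x y z : A) : ⁅⁅⁅lnc g, x⁆, y⁆, z⁆ ∈ T A (m + 2 + 2) := by
    simpa only [lnc_snoc, brk_eq_lie] using
      lnc_mem_T (m := m + 2 + 2) (Fin.snoc (Fin.snoc (Fin.snoc g x) y) z)
  simpa only [commProd, lnc_snoc, lnc_three, brk_eq_lie] using
    commProd_comp_perm_sub_mem _ hu σ f
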